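/- arXiv:2410.15125 — 2 statements merged into one kernel-verified Lean document; each statement's English description precedes it below -/
import Mathlib

section
/- Let p be an odd prime, k a number field, and g(x) ∈ k[x] an irreducible polynomial of degree greater than 3. Then there exists c ∈ k such that g(c) is not a p-th power in k, i.e., there is no y ∈ k with y^p = g(c). -/
open Polynomial

-- aux 1: irreducible of natDegree > 1 has no roots
lemma aux_eval_ne_zero {k : Type*} [Field k] {g : k[X]} (hg : Irreducible g)
    (hdeg : 1 < g.natDegree) (z : k) : g.eval z ≠ 0 := by
  intro h
  obtain ⟨t, ht⟩ := (dvd_iff_isRoot).mpr h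
  rcases hg.isUnit_or_isUnit ht with h1 | h2
  · exact (Polynomial.not_isUnit_X_sub_C z) h1
  · have : g.natDegree = 1 := by
      rw [ht, natDegree_mul (X_sub_C_ne_zero z) (fun h0 => by simp [h0] at ht; exact hg.ne_zero (by simpa [h0] using ht)),
        natDegree_X_sub_C, Polynomial.natDegree_eq_zero_of_isUnit h2]
    omega

-- aux 2: valuation of eval
lemma aux_val_eval_le_one {k : Type*} [Field k] {Γ : Type*} [LinearOrderedCommGroupWithZero Γ]
    (w : Valuation k Γ) {q : k[X]} (hq : ∀ i, w (q.coeff i) ≤ 1) {c : k} (hc : w c ≤ 1) :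
    w (q.eval c) ≤ 1 := by
  rw [Polynomial.eval_eq_sum_range]
  refine Valuation.map_sum_le w ?_
  intro i _
  calc w (q.coeff i * c ^ i) = w (q.coeff i) * (w c) ^ i := by rw [map_mul, map_pow]
  _ ≤ 1 * 1 := mul_le_mul' (hq i) (pow_le_one' hc i)
  _ = 1 := mul_one 1

open Polynomial Multiplicative

lemma aux_pow_le_of_lt_one {p : ℕ} (hp : 2 ≤ p) {y : WithZero (Multiplicative ℤ)}
    (h0 : y ≠ 0) (h1 : y ^ p < 1) :
    y ^ p ≤ (Multiplicative.ofAdd (-2 : ℤ) : Multiplicative ℤ) := by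
  set γ := WithZero.unzero h0 with hγ
  have hy : y = (γ : WithZero (Multiplicative ℤ)) := (WithZero.coe_unzero h0).symm
  rw [hy, ← WithZero.coe_pow] at h1 ⊢
  rw [← WithZero.coe_one, WithZero.coe_lt_coe] at h1
  rw [WithZero.coe_le_coe]
  have h1' : (p : ℤ) * Multiplicative.toAdd γ < 0 := by
    have := Multiplicative.toAdd_lt.mpr h1
    rwa [toAdd_pow, toAdd_one, nsmul_eq_mul] at this
  have ha : Multiplicative.toAdd γ ≤ -1 := by nlinarith [Int.lt_iff_add_one_le.mp (by nlinarith : Multiplicative.toAdd γ < 0)]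
  have : (p : ℤ) * Multiplicative.toAdd γ ≤ -2 := by nlinarith
  have : Multiplicative.toAdd (γ ^ p) ≤ Multiplicative.toAdd (Multiplicative.ofAdd (-2 : ℤ)) := by
    rwa [toAdd_pow, nsmul_eq_mul, toAdd_ofAdd]
  exact Multiplicative.toAdd_le.mp this

lemma aux_pow_ne_ofAdd_neg_one {p : ℕ} (hp : 2 ≤ p) (y : WithZero (Multiplicative ℤ)) :
    y ^ p ≠ ((Multiplicative.ofAdd (-1 : ℤ) : Multiplicative ℤ) : WithZero (Multiplicative ℤ)) := by
  intro h
  rcases eq_or_ne y 0 with rfl | h0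
  · rw [zero_pow (by omega)] at h
    exact (WithZero.coe_ne_zero (a := (Multiplicative.ofAdd (-1 : ℤ)))) h.symm
  · set γ := WithZero.unzero h0
    have hy : y = (γ : WithZero (Multiplicative ℤ)) := (WithZero.coe_unzero h0).symm
    rw [hy, ← WithZero.coe_pow, WithZero.coe_inj] at h
    have : (p : ℤ) * Multiplicative.toAdd γ = -1 := by
      have := congrArg Multiplicative.toAdd h
      rwa [toAdd_pow, nsmul_eq_mul, toAdd_ofAdd] at this
    have hdvd : (p : ℤ) ∣ -1 := ⟨_, this.symm⟩
    have := Int.le_of_dvd (by norm_num) (Int.dvd_neg.mp hdvd)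
    omega

-- sum polynomial coeff/eval
lemma aux_coeff_sum {R : Type*} [CommRing R] (f : ℕ → R) (N j : ℕ) (hj : j < N) :
    (∑ i ∈ Finset.range N, C (f i) * X ^ i).coeff j = f j := by
  rw [finset_sum_coeff]
  rw [Finset.sum_eq_single j (fun i _ hij => by rw [coeff_C_mul, coeff_X_pow, if_neg (fun hh => hij hh.symm), mul_zero])
    (fun hj' => absurd (Finset.mem_range.mpr hj) hj')]
  simp

lemma aux_coeff_sum_ge {R : Type*} [CommRing R] (f : ℕ → R) (N j : ℕ) (hj : N ≤ j) :
    (∑ i ∈ Finset.range N, C (f i) * X ^ i).coeff j = 0 := by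
  rw [finset_sum_coeff]
  refine Finset.sum_eq_zero fun i hi => ?_
  rw [coeff_C_mul, coeff_X_pow, if_neg (by have := Finset.mem_range.mp hi; omega), mul_zero]

lemma aux_eval_sum {R : Type*} [CommRing R] (f : ℕ → R) (N : ℕ) (t : R) :
    (∑ i ∈ Finset.range N, C (f i) * X ^ i).eval t = ∑ i ∈ Finset.range N, f i * t ^ i := by
  rw [eval_finset_sum]
  exact Finset.sum_congr rfl fun i _ => by simp

open IsDedekindDomain IsDedekindDomain.HeightOneSpectrum NumberField

/-- Let `p` be an odd prime, `k` a number field, and `g ∈ k[x]` irreducible of degree greater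
than 3. Then there exists `c ∈ k` such that `g(c)` is not a `p`-th power in `k`. -/
theorem exists_non_pth_power_value
    (p : ℕ) (hp : p.Prime) (hodd : Odd p)
    (k : Type*) [Field k] [NumberField k]
    (g : k[X]) (hg : Irreducible g) (hdeg : 3 < g.natDegree) :
    ∃ c : k, ¬ ∃ y : k, y ^ p = g.eval c := by
  by_contra hcon
  push_neg at hcon
  set ι := algebraMap (𝓞 k) k with hι
  have hιinj : Function.Injective ι := IsFractionRing.injective (𝓞 k) k
  have hp2 : 2 ≤ p := hp.two_le
  set n := g.natDegree with hn
  have hn1 : 1 < n := by omega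
  have hnoroot : ∀ z : k, g.eval z ≠ 0 := aux_eval_ne_zero hg hn1
  -- Bezout from separability
  obtain ⟨A, B, hAB⟩ : IsCoprime g (derivative g) := hg.separable
  -- integer normalization
  obtain ⟨d₁, hG0⟩ := IsLocalization.integerNormalization_map_to_map
    (nonZeroDivisors (𝓞 k)) g
  obtain ⟨d₂, hA0⟩ := IsLocalization.integerNormalization_map_to_map
    (nonZeroDivisors (𝓞 k)) A
  obtain ⟨d₃, hB0⟩ := IsLocalization.integerNormalization_map_to_map
    (nonZeroDivisors (𝓞 k)) B
  set G : (𝓞 k)[X] := IsLocalization.integerNormalization (nonZeroDivisors (𝓞 k)) g with hGdef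
  set A' : (𝓞 k)[X] := IsLocalization.integerNormalization (nonZeroDivisors (𝓞 k)) A with hA'def
  set B' : (𝓞 k)[X] := IsLocalization.integerNormalization (nonZeroDivisors (𝓞 k)) B with hB'def
  have hsmul : ∀ (d : 𝓞 k) (q : k[X]), d • q = C (ι d) * q := by
    intro d q
    rw [Algebra.smul_def]; rfl
  have hG : G.map ι = C (ι d₁) * g := by rw [hG0]; exact hsmul _ _
  have hA : A'.map ι = C (ι d₂) * A := by rw [hA0]; exact hsmul _ _
  have hB : B'.map ι = C (ι d₃) * B := by rw [hB0]; exact hsmul _ _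
  have hGcoeff : ∀ i, ι (G.coeff i) = ι d₁ * g.coeff i := by
    intro i
    rw [← coeff_map, hG, coeff_C_mul]
  have hA'coeff : ∀ i, ι (A'.coeff i) = ι d₂ * A.coeff i := by
    intro i
    rw [← coeff_map, hA, coeff_C_mul]
  have hB'coeff : ∀ i, ι (B'.coeff i) = ι d₃ * B.coeff i := by
    intro i
    rw [← coeff_map, hB, coeff_C_mul]
  have hG'coeff : ∀ i, ι (G.derivative.coeff i) = ι d₁ * (derivative g).coeff i := by
    intro i
    rw [← coeff_map, ← derivative_map, hG, derivative_C_mul, coeff_C_mul]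
  have hιne : ∀ x : 𝓞 k, x ≠ 0 → ι x ≠ 0 := by
    intro x hx h
    exact hx (hιinj (by rw [h, map_zero]))
  have hd₁0 : (d₁ : 𝓞 k) ≠ 0 := nonZeroDivisors.coe_ne_zero d₁
  have hGeval : ∀ z : 𝓞 k, ι (G.eval z) = ι d₁ * g.eval (ι z) := by
    intro z
    rw [← Polynomial.eval₂_at_apply, ← eval_map, hG, eval_mul, eval_C]
  -- coefficients of G
  set b : 𝓞 k := G.coeff 0 with hbdef
  have hg0 : g.coeff 0 ≠ 0 := by
    rw [coeff_zero_eq_eval_zero]; exact hnoroot 0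
  have hbne : b ≠ 0 := by
    intro h
    have := hGcoeff 0
    rw [← hbdef, h, map_zero] at this
    exact hg0 (by
      rcases mul_eq_zero.mp this.symm with h1 | h2
      · exact absurd h1 (hιne _ hd₁0)
      · exact h2)
  have hGnne : G.coeff n ≠ 0 := by
    intro h
    have := hGcoeff n
    rw [h, map_zero] at this
    have hlc : g.coeff n ≠ 0 := by
      rw [hn, ← leadingCoeff]
      exact leadingCoeff_ne_zero.mpr hg.ne_zero
    rcases mul_eq_zero.mp this.symm with h1 | h2
    · exact absurd h1 (hιne _ hd₁0)
    · exact hlc h2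
  have hGdeg : G.natDegree ≤ n := by
    have h1 : (G.map ι).natDegree = G.natDegree := natDegree_map_eq_of_injective hιinj G
    rw [hG] at h1
    calc G.natDegree = (C (ι d₁) * g).natDegree := h1.symm
    _ ≤ (C (ι d₁)).natDegree + g.natDegree := natDegree_mul_le
    _ = n := by rw [natDegree_C, zero_add]
  set E : 𝓞 k := (d₁ : 𝓞 k) * (d₂ : 𝓞 k) * (d₃ : 𝓞 k) * b with hEdef
  set W : (𝓞 k)[X] := ∑ i ∈ Finset.range n, C (G.coeff (i + 1) * (b * E) ^ i) * X ^ i with hWdef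
  have hkey : ∀ t : 𝓞 k, G.eval (b * E * t) = b * (1 + E * (t * W.eval t)) := by
    intro t
    have hlt : G.natDegree < n + 1 := by omega
    rw [eval_eq_sum_range' hlt (b * E * t), Finset.sum_range_succ', hWdef, aux_eval_sum]
    simp only [Finset.mul_sum, mul_add, mul_one, pow_zero]
    rw [add_comm]
    congr 1
    exact Finset.sum_congr rfl fun i _ => by ring
  set u : (𝓞 k)[X] := 1 + C E * (X * W) with hudef
  have hueval : ∀ t : 𝓞 k, u.eval t = 1 + E * (t * W.eval t) := by
    intro t; simp [hudef]
  have hGu : ∀ t : 𝓞 k, G.eval (b * E * t) = b * u.eval t := by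
    intro t; rw [hueval, hkey]
  -- u has nonzero coefficient at degree n
  have hucoeffn : u.coeff n = E * (G.coeff n * (b * E) ^ (n - 1)) := by
    obtain ⟨m0, hm0⟩ : ∃ m0, n = m0 + 1 := ⟨n - 1, by omega⟩
    rw [hudef]
    rw [coeff_add, coeff_C_mul, hm0, coeff_X_mul, coeff_one, if_neg (by omega),
      aux_coeff_sum _ _ _ (by omega), zero_add]
    simp
  have hucne : u.coeff n ≠ 0 := by
    rw [hucoeffn]
    refine mul_ne_zero ?_ (mul_ne_zero hGnne (pow_ne_zero _ (mul_ne_zero hbne ?_)))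
    · exact mul_ne_zero (mul_ne_zero (mul_ne_zero hd₁0 (nonZeroDivisors.coe_ne_zero d₂))
        (nonZeroDivisors.coe_ne_zero d₃)) hbne
    · exact mul_ne_zero (mul_ne_zero (mul_ne_zero hd₁0 (nonZeroDivisors.coe_ne_zero d₂))
        (nonZeroDivisors.coe_ne_zero d₃)) hbne
  -- ℂ embeddings: find m : ℤ with u.eval m a nonunit
  obtain ⟨m, hm⟩ : ∃ m : ℤ, ¬ IsUnit (u.eval (m : 𝓞 k)) := by
    by_contra hall
    push_neg at hall
    set F : Polynomial ℂ := ∏ σ : k →ₐ[ℚ] ℂ, u.map ((σ : k →+* ℂ).comp ι) with hFdef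
    have hτinj : ∀ σ : k →ₐ[ℚ] ℂ, Function.Injective ((σ : k →+* ℂ).comp ι) := by
      intro σ
      rw [RingHom.coe_comp]
      exact (RingHom.injective _).comp hιinj
    have hfac_ne : ∀ σ : k →ₐ[ℚ] ℂ, u.map ((σ : k →+* ℂ).comp ι) ≠ 0 := by
      intro σ h0
      have : (u.map ((σ : k →+* ℂ).comp ι)).coeff n = 0 := by rw [h0, coeff_zero]
      rw [coeff_map] at this
      exact hucne (hτinj σ (by rw [this, map_zero]))
    have hfac_deg : ∀ σ : k →ₐ[ℚ] ℂ, n ≤ (u.map ((σ : k →+* ℂ).comp ι)).natDegree := by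
      intro σ
      refine le_natDegree_of_ne_zero ?_
      rw [coeff_map]
      intro h0
      exact hucne (hτinj σ (by rw [h0, map_zero]))
    have hFdeg : 1 ≤ F.natDegree := by
      rw [hFdef, natDegree_prod _ _ (fun σ _ => hfac_ne σ)]
      obtain ⟨σ⟩ : Nonempty (k →ₐ[ℚ] ℂ) := ⟨IsAlgClosed.lift⟩
      calc 1 ≤ n := by omega
      _ ≤ (u.map ((σ : k →+* ℂ).comp ι)).natDegree := hfac_deg σ
      _ ≤ _ := Finset.single_le_sum (f := fun σ : k →ₐ[ℚ] ℂ => (u.map ((σ : k →+* ℂ).comp ι)).natDegree) (fun τ _ => Nat.zero_le _) (Finset.mem_univ σ)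
    have hconst : ∀ z : ℚ, F ≠ C (algebraMap ℚ ℂ z) := by
      intro z h0
      rw [h0, natDegree_C] at hFdeg
      omega
    have hfin : ({x : ℂ | (F - C (algebraMap ℚ ℂ 1)).IsRoot x} ∪
        {x : ℂ | (F - C (algebraMap ℚ ℂ (-1))).IsRoot x}).Finite := by
      refine Set.Finite.union (Polynomial.finite_setOf_isRoot ?_)
        (Polynomial.finite_setOf_isRoot ?_) <;>
        exact fun h0 => hconst _ (sub_eq_zero.mp h0)
    have hinf : Set.Infinite (Set.range (Int.cast : ℤ → ℂ)) :=
      Set.infinite_range_of_injective Int.cast_injective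
    obtain ⟨x, hx1, hx2⟩ := (hinf.diff hfin).nonempty
    obtain ⟨m, rfl⟩ := hx1
    have hev : ∀ σ : k →ₐ[ℚ] ℂ,
        (u.map ((σ : k →+* ℂ).comp ι)).eval ((m : ℤ) : ℂ) = σ (ι (u.eval ((m : ℤ) : 𝓞 k))) := by
      intro σ
      have h1 : ((m : ℤ) : ℂ) = ((σ : k →+* ℂ).comp ι) ((m : ℤ) : 𝓞 k) := by
        rw [map_intCast]
      rw [h1, eval_map, eval₂_at_apply]
      simp
    have hFeval : F.eval ((m : ℤ) : ℂ) =
        algebraMap ℚ ℂ ((RingOfIntegers.norm ℚ (u.eval ((m : ℤ) : 𝓞 k)) : ℚ)) := by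
      rw [hFdef, eval_prod, RingOfIntegers.coe_norm, Algebra.norm_eq_prod_embeddings]
      exact Finset.prod_congr rfl fun σ _ => hev σ
    have hnorm := NumberField.isUnit_iff_norm.mp (hall m)
    rcases (abs_eq (by norm_num : (0:ℚ) ≤ 1)).mp hnorm with h | h <;>
    [ exact hx2 (Set.mem_union_left _ (by
        simp only [Set.mem_setOf_eq, IsRoot, eval_sub, eval_C, sub_eq_zero]
        rw [hFeval, h, map_one]));
      exact hx2 (Set.mem_union_right _ (by
        simp only [Set.mem_setOf_eq, IsRoot, eval_sub, eval_C, sub_eq_zero]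
        rw [hFeval, h]))]
  set x₀ : 𝓞 k := u.eval ((m : ℤ) : 𝓞 k) with hx₀def
  have hx₀ne : x₀ ≠ 0 := by
    intro h0
    have h1 := hGeval (b * E * ((m : ℤ) : 𝓞 k))
    rw [hGu, ← hx₀def, h0, mul_zero, map_zero] at h1
    rcases mul_eq_zero.mp h1.symm with h2 | h3
    · exact absurd h2 (hιne _ hd₁0)
    · exact hnoroot _ h3
  -- the prime ideal
  obtain ⟨𝔪, hmax, hsub⟩ := Ideal.exists_le_maximal (Ideal.span {x₀})
    (by rw [Ne, Ideal.span_singleton_eq_top]; exact hm)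
  have hx₀mem : x₀ ∈ 𝔪 := hsub (Ideal.subset_span rfl)
  set v : HeightOneSpectrum (𝓞 k) :=
    ⟨𝔪, hmax.isPrime, fun hbot => hx₀ne (by rwa [hbot, Ideal.mem_bot] at hx₀mem)⟩ with hvdef
  set w : Valuation k (WithZero (Multiplicative ℤ)) := v.valuation k with hwdef
  have hw_le : ∀ x : 𝓞 k, w (ι x) ≤ 1 := fun x => v.valuation_le_one x
  have hw_eq1 : ∀ x : 𝓞 k, x ∉ 𝔪 → w (ι x) = 1 := by
    intro x hx
    refine le_antisymm (hw_le x) (not_lt.mp fun hlt => hx ?_)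
    have := (v.valuation_lt_one_iff_dvd x).mp hlt
    have hle : Ideal.span {x} ≤ 𝔪 := Ideal.le_of_dvd this
    exact (Ideal.span_singleton_le_iff_mem _).mp hle
  have hw_lt : w (ι x₀) < 1 := by
    refine (v.valuation_lt_one_iff_dvd x₀).mpr ?_
    exact Ideal.dvd_iff_le.mpr hsub
  have hEnot : E ∉ 𝔪 := by
    intro hE
    refine hmax.ne_top ((Ideal.eq_top_iff_one _).mpr ?_)
    have heq : x₀ - E * (((m : ℤ) : 𝓞 k) * W.eval ((m : ℤ) : 𝓞 k)) = 1 := by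
      rw [hx₀def, hueval]; ring
    rw [← heq]
    exact Ideal.sub_mem _ hx₀mem (Ideal.mul_mem_right _ _ hE)
  have hd₁not : (d₁ : 𝓞 k) ∉ 𝔪 := fun h => hEnot
    (Ideal.mul_mem_right _ _ (Ideal.mul_mem_right _ _ (Ideal.mul_mem_right _ _ h)))
  have hd₂not : (d₂ : 𝓞 k) ∉ 𝔪 := fun h => hEnot
    (Ideal.mul_mem_right _ _ (Ideal.mul_mem_right _ _ (Ideal.mul_mem_left _ _ h)))
  have hd₃not : (d₃ : 𝓞 k) ∉ 𝔪 := fun h => hEnot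
    (Ideal.mul_mem_right _ _ (Ideal.mul_mem_left _ _ h))
  have hbnot : b ∉ 𝔪 := fun h => hEnot (Ideal.mul_mem_left _ _ h)
  -- coefficient bounds
  have hboundgen : ∀ (d : 𝓞 k), d ∉ 𝔪 → ∀ (P : (𝓞 k)[X]) (Q : k[X]),
      (∀ i, ι (P.coeff i) = ι d * Q.coeff i) → ∀ i, w (Q.coeff i) ≤ 1 := by
    intro d hd P Q hPQ i
    have h1 := hw_le (P.coeff i)
    rw [hPQ i, map_mul, hw_eq1 d hd, one_mul] at h1
    exact h1
  have hcg : ∀ i, w (g.coeff i) ≤ 1 := hboundgen _ hd₁not G g hGcoeff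
  have hcA : ∀ i, w (A.coeff i) ≤ 1 := hboundgen _ hd₂not A' A hA'coeff
  have hcB : ∀ i, w (B.coeff i) ≤ 1 := hboundgen _ hd₃not B' B hB'coeff
  have hcg' : ∀ i, w ((derivative g).coeff i) ≤ 1 :=
    hboundgen _ hd₁not G.derivative (derivative g) hG'coeff
  -- the point c
  set z₀ : 𝓞 k := b * E * ((m : ℤ) : 𝓞 k) with hz₀def
  set c : k := ι z₀ with hcdef
  have hc1 : w c ≤ 1 := hw_le _
  have hgc : w (g.eval c) = w (ι x₀) := by
    have h1 := hGeval z₀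
    rw [hz₀def, hGu, map_mul] at h1
    have h2 := congrArg w h1
    rw [map_mul, map_mul, hw_eq1 b hbnot, hw_eq1 _ hd₁not, one_mul, one_mul] at h2
    exact h2.symm
  have hgclt : w (g.eval c) < 1 := by rw [hgc]; exact hw_lt
  have hgcne : w (g.eval c) ≠ 0 := by
    rw [Valuation.ne_zero_iff]; exact hnoroot c
  obtain ⟨y, hy⟩ := hcon c
  have hgc2 : w (g.eval c) ≤ ((Multiplicative.ofAdd (-2 : ℤ) : Multiplicative ℤ) :
      WithZero (Multiplicative ℤ)) := by
    rw [← hy, map_pow] at hgclt hgcne ⊢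
    exact aux_pow_le_of_lt_one hp2 (fun h => hgcne (by rw [h, zero_pow (by omega)])) hgclt
  -- Bezout at c
  have hABc : A.eval c * g.eval c + B.eval c * (derivative g).eval c = 1 := by
    have := congrArg (eval c) hAB
    simpa using this
  have hwg' : w ((derivative g).eval c) = 1 := by
    have ht1 : w (A.eval c * g.eval c) < 1 := by
      rw [map_mul]
      calc w (A.eval c) * w (g.eval c) ≤ 1 * w (g.eval c) :=
            mul_le_mul_left (aux_val_eval_le_one w hcA hc1) _
      _ = w (g.eval c) := one_mul _
      _ < 1 := hgclt
    have ht2le : w (B.eval c) ≤ 1 := aux_val_eval_le_one w hcB hc1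
    have ht3le : w ((derivative g).eval c) ≤ 1 := aux_val_eval_le_one w hcg' hc1
    by_contra hne
    have h2 : w (B.eval c * (derivative g).eval c) < 1 := by
      rw [map_mul]
      calc w (B.eval c) * w ((derivative g).eval c) ≤ 1 * w ((derivative g).eval c) :=
            mul_le_mul_left ht2le _
      _ = w ((derivative g).eval c) := one_mul _
      _ < 1 := lt_of_le_of_ne ht3le hne
    have h3 := w.map_add (A.eval c * g.eval c) (B.eval c * (derivative g).eval c)
    rw [hABc, map_one] at h3
    exact absurd (h3.trans_lt (max_lt ht1 h2)) (lt_irrefl 1)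
  -- uniformizer
  obtain ⟨π, hπ⟩ := v.intValuation_exists_uniformizer
  set s : k := ι π with hsdef
  have hws : w s = ((Multiplicative.ofAdd (-1 : ℤ) : Multiplicative ℤ) :
      WithZero (Multiplicative ℤ)) := by
    rw [hsdef, hwdef, hι, valuation_of_algebraMap]
    exact hπ
  have hs1 : w s ≤ 1 := by
    rw [hws]
    rw [← WithZero.coe_one, WithZero.coe_le_coe, ← ofAdd_zero]
    exact Multiplicative.ofAdd_le.mpr (by norm_num)
  have hsm1 : w s < 1 := by
    rw [hws, ← WithZero.coe_one, WithZero.coe_lt_coe, ← ofAdd_zero]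
    exact Multiplicative.ofAdd_lt.mpr (by norm_num)
  -- Taylor-type decomposition
  set q : k[X] := g.comp (X + C c) with hqdef
  set Q : (𝓞 k)[X] := G.comp (X + C z₀) with hQdef
  have hQmap : Q.map ι = C (ι d₁) * q := by
    rw [hQdef, Polynomial.map_comp, hG, Polynomial.map_add, map_X, map_C, hqdef, mul_comp, C_comp]
  have hqcoeff : ∀ i, w (q.coeff i) ≤ 1 := by
    refine hboundgen _ hd₁not Q q (fun i => ?_)
    rw [← coeff_map, hQmap, coeff_C_mul]
  have hq0 : q.coeff 0 = g.eval c := by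
    rw [coeff_zero_eq_eval_zero, hqdef, eval_comp]
    simp
  have hq1 : q.coeff 1 = (derivative g).eval c := by
    have hd : derivative q = (derivative g).comp (X + C c) := by
      rw [hqdef, derivative_comp]
      simp
    have h2 : (derivative q).coeff 0 = q.coeff 1 := by
      rw [coeff_derivative]
      simp
    rw [← h2, hd, coeff_zero_eq_eval_zero, eval_comp]
    simp
  set r : k[X] := q.divX.divX with hrdef
  have hrcoeff : ∀ i, w (r.coeff i) ≤ 1 := by
    intro i
    rw [hrdef, coeff_divX, coeff_divX]
    exact hqcoeff _
  have hqdecomp : q.eval s = (r.eval s * s + (derivative g).eval c) * s + g.eval c := by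
    conv_lhs => rw [← divX_mul_X_add q]
    rw [eval_add, eval_mul, eval_X, eval_C, hq0]
    congr 2
    conv_lhs => rw [← divX_mul_X_add q.divX]
    rw [eval_add, eval_mul, eval_X, eval_C, coeff_divX, hq1, hrdef]
  have hwq : w (q.eval s) = ((Multiplicative.ofAdd (-1 : ℤ) : Multiplicative ℤ) :
      WithZero (Multiplicative ℤ)) := by
    rw [hqdecomp]
    have h0 : w (r.eval s * s) < w ((derivative g).eval c) := by
      rw [hwg', map_mul]
      calc w (r.eval s) * w s ≤ 1 * w s :=
            mul_le_mul_left (aux_val_eval_le_one w hrcoeff hs1) _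
      _ = w s := one_mul _
      _ < 1 := hsm1
    have h1 : w (r.eval s * s + (derivative g).eval c) = 1 := by
      rw [Valuation.map_add_eq_of_lt_right _ h0, hwg']
    have h2 : w ((r.eval s * s + (derivative g).eval c) * s) = w s := by
      rw [map_mul, h1, one_mul]
    have h3 : w (g.eval c) < w ((r.eval s * s + (derivative g).eval c) * s) := by
      rw [h2, hws]
      refine lt_of_le_of_lt hgc2 ?_
      rw [WithZero.coe_lt_coe]
      exact Multiplicative.ofAdd_lt.mpr (by norm_num)
    rw [add_comm, Valuation.map_add_eq_of_lt_right _ h3, h2, hws]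
  have hfinal : q.eval s = g.eval (s + c) := by
    rw [hqdef, eval_comp]; simp
  obtain ⟨y₂, hy₂⟩ := hcon (s + c)
  refine aux_pow_ne_ofAdd_neg_one hp2 (w y₂) ?_
  rw [← map_pow, hy₂, ← hfinal, hwq]
end

section
/- Let p be a prime, let L be a number field, and fix q ∈ L with q ≠ 0. Then the set of rational prime numbers ℓ such that q·ℓ is a p-th power in L (i.e., there exists y ∈ L with y^p = q·ℓ) is finite. In particular, only finitely many rational primes ℓ are themselves p-th powers in L. -/
open NumberField Ideal IsDedekindDomain
open scoped nonZeroDivisors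

/-- The different ideal of a number field is nonzero. -/
lemma differentIdeal_ne_bot_aux (L : Type*) [Field L] [NumberField L] :
    differentIdeal ℤ (𝓞 L) ≠ ⊥ := by
  intro h
  have hco := coeIdeal_differentIdeal ℤ ℚ L (𝓞 L)
  rw [h] at hco
  simp only [FractionalIdeal.coeIdeal_bot] at hco
  have hdual : (FractionalIdeal.dual ℤ ℚ (1 : FractionalIdeal (𝓞 L)⁰ L)) ≠ 0 :=
    FractionalIdeal.dual_ne_zero ℤ ℚ one_ne_zero
  have := mul_inv_cancel₀ hdual
  rw [← hco, mul_zero] at this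
  exact one_ne_zero this.symm

/-- If two primes lie in the same proper ideal of the ring of integers, they are equal. -/
lemma primes_eq_of_mem_ideal (L : Type*) [Field L] [NumberField L]
    (P : Ideal (𝓞 L)) (hP : P ≠ ⊤) {ℓ₁ ℓ₂ : ℕ} (h₁ : ℓ₁.Prime) (h₂ : ℓ₂.Prime)
    (m₁ : (ℓ₁ : 𝓞 L) ∈ P) (m₂ : (ℓ₂ : 𝓞 L) ∈ P) : ℓ₁ = ℓ₂ := by
  by_contra hne
  have hco : Nat.gcd ℓ₁ ℓ₂ = 1 := (Nat.coprime_primes h₁ h₂).mpr hne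
  have hbez := Nat.gcd_eq_gcd_ab ℓ₁ ℓ₂
  rw [hco] at hbez
  apply hP
  rw [Ideal.eq_top_iff_one]
  have : (1 : 𝓞 L) = (ℓ₁ : 𝓞 L) * ((Nat.gcdA ℓ₁ ℓ₂ : ℤ) : 𝓞 L)
      + (ℓ₂ : 𝓞 L) * ((Nat.gcdB ℓ₁ ℓ₂ : ℤ) : 𝓞 L) := by
    have := congrArg (fun n : ℤ => ((n : 𝓞 L))) hbez
    push_cast at this ⊢
    exact this
  rw [this]
  exact P.add_mem (P.mul_mem_right _ m₁) (P.mul_mem_right _ m₂)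

/-- Let `p` be a prime, `L` a number field, and `q ∈ L` nonzero. Then the set of rational
primes `ℓ` such that `q·ℓ` is a `p`-th power in `L` is finite. -/
theorem finite_primes_pth_power
    (p : ℕ) (hp : p.Prime)
    (L : Type*) [Field L] [NumberField L]
    (q : L) (hq : q ≠ 0) :
    {ℓ : ℕ | ℓ.Prime ∧ ∃ y : L, y ^ p = q * (ℓ : L)}.Finite := by
  classical
  obtain ⟨a, b, hb, hab⟩ := IsFractionRing.div_surjective (A := 𝓞 L) q
  have hbne : b ≠ 0 := nonZeroDivisors.ne_zero hb
  have hbL : (algebraMap (𝓞 L) L) b ≠ 0 := by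
    simpa using (IsFractionRing.injective (𝓞 L) L).ne hbne
  have ha : a ≠ 0 := by
    intro h
    apply hq
    rw [← hab, h, map_zero, zero_div]
  set c : 𝓞 L := a * b ^ (p - 1) with hc_def
  have hc : c ≠ 0 := mul_ne_zero ha (pow_ne_zero _ hbne)
  set D : Ideal (𝓞 L) := Ideal.span {c} * differentIdeal ℤ (𝓞 L) with hD_def
  have hD : D ≠ 0 := by
    apply mul_ne_zero
    · simpa using hc
    · exact differentIdeal_ne_bot_aux L
  -- Key step: every prime in the set gives rise to a height-one prime dividing `D`.
  have key : ∀ ℓ : ℕ, ℓ.Prime → (∃ y : L, y ^ p = q * (ℓ : L)) →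
      ∃ v : HeightOneSpectrum (𝓞 L), v.asIdeal ∣ D ∧ (ℓ : 𝓞 L) ∈ v.asIdeal := by
    intro ℓ hℓ ⟨y, hy⟩
    have hℓR : (ℓ : 𝓞 L) ≠ 0 := Nat.cast_ne_zero.mpr hℓ.ne_zero
    -- `z = y * b` is an algebraic integer with `z ^ p = c * ℓ`.
    set z : L := y * algebraMap (𝓞 L) L b with hz_def
    have hz : z ^ p = algebraMap (𝓞 L) L (c * (ℓ : 𝓞 L)) := by
      have hp1 : p - 1 + 1 = p := Nat.succ_pred_eq_of_pos hp.pos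
      have hbp : (algebraMap (𝓞 L) L b) ^ p
          = (algebraMap (𝓞 L) L b) ^ (p - 1) * algebraMap (𝓞 L) L b := by
        rw [← pow_succ, hp1]
      rw [hz_def, mul_pow, hy, ← hab, hbp, hc_def]
      push_cast
      field_simp
    have hzi : IsIntegral ℤ z := by
      apply IsIntegral.of_pow hp.pos
      rw [hz]
      exact (c * (ℓ : 𝓞 L)).isIntegral_coe
    obtain ⟨w, hw⟩ := IsIntegralClosure.isIntegral_iff (R := ℤ) (A := 𝓞 L) (B := L) |>.mp hzi
    have hwp : w ^ p = c * (ℓ : 𝓞 L) := by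
      apply IsFractionRing.injective (𝓞 L) L
      rw [map_pow, hw, hz]
    -- find a maximal ideal `P` of `𝓞 L` above `ℓ`
    have hℓZ : Prime ((ℓ : ℤ)) := Nat.prime_iff_prime_int.mp hℓ
    have hmaxZ : (Ideal.span {(ℓ : ℤ)}).IsMaximal := by
      have hprime : (Ideal.span {(ℓ : ℤ)}).IsPrime :=
        (Ideal.span_singleton_prime hℓZ.ne_zero).mpr hℓZ
      exact hprime.isMaximal (by simpa using hℓZ.ne_zero)
    have hker : RingHom.ker (algebraMap ℤ (𝓞 L)) ≤ Ideal.span {(ℓ : ℤ)} := by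
      rw [(RingHom.injective_iff_ker_eq_bot _).mp (algebraMap ℤ (𝓞 L)).injective_int]
      exact bot_le
    obtain ⟨P, hPmax, hPcomap⟩ :=
      Ideal.exists_ideal_over_maximal_of_isIntegral (S := 𝓞 L) (Ideal.span {(ℓ : ℤ)}) hker
    have hℓP : (ℓ : 𝓞 L) ∈ P := by
      have : (ℓ : ℤ) ∈ P.comap (algebraMap ℤ (𝓞 L)) := by
        rw [hPcomap]; exact Ideal.subset_span rfl
      simpa using this
    have hPbot : P ≠ ⊥ := by
      intro h
      rw [h] at hℓP
      exact hℓR (Ideal.mem_bot.mp hℓP)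
    have hPprime : P.IsPrime := hPmax.isPrime
    have hPel : Prime P := Ideal.prime_of_isPrime hPbot hPprime
    refine ⟨⟨P, hPprime, hPbot⟩, ?_, hℓP⟩
    -- show `P ∣ D`
    have hdvdℓ : P ∣ Ideal.span {(ℓ : 𝓞 L)} :=
      Ideal.dvd_iff_le.mpr (Ideal.span_le.mpr (Set.singleton_subset_iff.mpr hℓP))
    by_cases hcP : c ∈ P
    · -- `P` divides `span {c}`, which contains `D`
      apply Ideal.dvd_iff_le.mpr
      exact le_trans Ideal.mul_le_left
        (Ideal.span_le.mpr (Set.singleton_subset_iff.mpr hcP))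
    · -- unramified part: `P² ∣ span {ℓ}`, hence `P ∣ differentIdeal ℤ (𝓞 L)`
      have hspan : Ideal.span {w} ^ p
          = Ideal.span {c} * Ideal.span {(ℓ : 𝓞 L)} := by
        rw [Ideal.span_singleton_pow, Ideal.span_singleton_mul_span_singleton, hwp]
      have hmc : emultiplicity P (Ideal.span {c}) = 0 := by
        rw [emultiplicity_eq_zero]
        intro hdvd
        exact hcP (Ideal.span_le.mp (Ideal.dvd_iff_le.mp hdvd) rfl)
      have hmain : p * emultiplicity P (Ideal.span {w})
          = emultiplicity P (Ideal.span {(ℓ : 𝓞 L)}) := by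
        rw [← emultiplicity_pow hPel, hspan, emultiplicity_mul hPel, hmc, zero_add]
      have hmℓpos : emultiplicity P (Ideal.span {(ℓ : 𝓞 L)}) ≠ 0 := by
        intro h0
        rw [← dvd_iff_emultiplicity_pos] at hdvdℓ
        rw [h0] at hdvdℓ
        exact lt_irrefl _ hdvdℓ
      have hmw : emultiplicity P (Ideal.span {w}) ≠ 0 := by
        intro h0
        rw [h0, mul_zero] at hmain
        exact hmℓpos hmain.symm
      have h2le : (2 : ℕ∞) ≤ emultiplicity P (Ideal.span {(ℓ : 𝓞 L)}) := by
        rw [← hmain]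
        calc (2 : ℕ∞) = 2 * 1 := (mul_one _).symm
        _ ≤ (p : ℕ∞) * emultiplicity P (Ideal.span {w}) := by
            apply mul_le_mul'
            · exact_mod_cast hp.two_le
            · exact Order.one_le_iff_pos.mpr (pos_iff_ne_zero.mpr hmw)
      have hP2 : P ^ 2 ∣ Ideal.span {(ℓ : 𝓞 L)} := pow_dvd_of_le_emultiplicity h2le
      have hmap : (Ideal.span {(ℓ : ℤ)}).map (algebraMap ℤ (𝓞 L))
          = Ideal.span {(ℓ : 𝓞 L)} := by
        rw [Ideal.map_span, Set.image_singleton]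
        norm_num
      have hdiff : P ^ (2 - 1) ∣ differentIdeal ℤ (𝓞 L) :=
        pow_sub_one_dvd_differentIdeal_aux ℤ ℚ L P (two_ne_zero)
          (by simpa using hℓZ.ne_zero) (hmap ▸ hP2)
      rw [pow_one] at hdiff
      exact Ideal.dvd_iff_le.mpr (le_trans Ideal.mul_le_right (Ideal.dvd_iff_le.mp hdiff))
  -- Package the finiteness.
  have hfin := Ideal.finite_factors hD
  refine Set.Finite.subset (Set.Finite.biUnion
      (t := fun v => {ℓ : ℕ | ℓ.Prime ∧ (ℓ : 𝓞 L) ∈ v.asIdeal}) hfin (fun v _ => ?_))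
      (fun ℓ hℓ => ?_)
  · apply Set.Subsingleton.finite
    intro ℓ₁ h₁ ℓ₂ h₂
    exact primes_eq_of_mem_ideal L v.asIdeal v.isPrime.ne_top h₁.1 h₂.1 h₁.2 h₂.2
  · obtain ⟨v, hv, hmem⟩ := key ℓ hℓ.1 hℓ.2
    exact Set.mem_biUnion hv ⟨hℓ.1, hmem⟩
end
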